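/- Assume the fourth-moment asymptotic for ζ: there are κ ∈ (0,1), a real polynomial P of degree 4, and C₀ > 0 such that |(1/T)·∫_0^T |ζ(1/2+iu)|⁴ du − P(log T)| ≤ C₀·T^{−κ} for all T ≥ 2. Then there is a constant C₁ > 0 (depending only on κ, P, C₀) such that for all t ≥ 10 and all η with 2/t < η < 1: ∫_0^{1/η} |ζ(1/2+i(t−r))|²·|ζ(1/2+i(t+r))|² dr ≤ C₁·((log t)⁴/η + t^{1−κ}). -/

import Mathlib

/-!
Write `M(T) = ∫₀ᵀ |ζ(1/2 + iu)|⁴ du` and `δ = 1/η < t/2`. By AM–GM the integrand is at most the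
mean of `|ζ(1/2 + i(t - r))|⁴` and `|ζ(1/2 + i(t + r))|⁴`, so the integral is at most
`(M(t + δ) - M(t - δ)) / 2`. The moment hypothesis says `M(T) = T P(log T) + O(T^{1-κ})`, and the
main terms differ by `O(δ (log t)⁴)` by the mean value theorem, because the derivative of
`T P(log T)` is `(P + P')(log T)`.
-/

open MeasureTheory intervalIntegral Polynomial

lemma continuous_norm_riemannZeta_criticalLine :
    Continuous fun u : ℝ => ‖riemannZeta (1 / 2 + Complex.I * u)‖ := by
  refine (continuous_iff_continuousAt.2 fun u => ?_).norm
  refine (differentiableAt_riemannZeta fun h => ?_).continuousAt.comp (by fun_prop)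
  simpa using congrArg Complex.re h

lemma integral_sq_mul_sq_le_integral_pow_four {f : ℝ → ℝ} (hf : Continuous f) (t : ℝ) {δ : ℝ}
    (hδ : 0 ≤ δ) :
    ∫ r in (0:ℝ)..δ, f (t - r) ^ 2 * f (t + r) ^ 2 ≤ (∫ u in (t - δ)..(t + δ), f u ^ 4) / 2 := by
  have hf4 : Continuous fun u => f u ^ 4 := by fun_prop
  calc ∫ r in (0:ℝ)..δ, f (t - r) ^ 2 * f (t + r) ^ 2
      ≤ ∫ r in (0:ℝ)..δ, (f (t - r) ^ 4 + f (t + r) ^ 4) / 2 := by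
        refine integral_mono_on hδ (Continuous.intervalIntegrable (by fun_prop) _ _)
          (Continuous.intervalIntegrable (by fun_prop) _ _) fun r _ => ?_
        nlinarith [two_mul_le_add_sq (f (t - r) ^ 2) (f (t + r) ^ 2)]
    _ = ((∫ u in (t - δ)..t, f u ^ 4) + ∫ u in t..(t + δ), f u ^ 4) / 2 := by
        rw [intervalIntegral.integral_div,
          integral_add (Continuous.intervalIntegrable (by fun_prop) _ _)
            (Continuous.intervalIntegrable (by fun_prop) _ _),
          integral_comp_sub_left (fun u => f u ^ 4), integral_comp_add_left (fun u => f u ^ 4),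
          sub_zero, add_zero]
    _ = (∫ u in (t - δ)..(t + δ), f u ^ 4) / 2 := by
        rw [integral_add_adjacent_intervals (hf4.intervalIntegrable _ _)
          (hf4.intervalIntegrable _ _)]

lemma abs_sub_mul_le_of_abs_one_div_mul_sub_le {T m p C κ : ℝ} (hT : 0 < T)
    (h : |1 / T * m - p| ≤ C * T ^ (-κ)) : |m - T * p| ≤ C * T ^ (1 - κ) :=
  calc |m - T * p| = |T * (1 / T * m - p)| := by congr 1; field_simp
    _ = T * |1 / T * m - p| := by rw [abs_mul, abs_of_pos hT]
    _ ≤ T * (C * T ^ (-κ)) := by gcongr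
    _ = C * T ^ (1 - κ) := by rw [sub_eq_add_neg, Real.rpow_add hT, Real.rpow_one]; ring

lemma abs_eval_le_sum_abs_coeff_mul_max_pow {Q : ℝ[X]} {n : ℕ} (hQ : Q.natDegree ≤ n) (y : ℝ) :
    |Q.eval y| ≤ (∑ i ∈ Finset.range (n + 1), |Q.coeff i|) * max 1 |y| ^ n := by
  rw [eval_eq_sum_range' (Nat.lt_succ_of_le hQ), Finset.sum_mul]
  refine (Finset.abs_sum_le_sum_abs _ _).trans (Finset.sum_le_sum fun i hi => ?_)
  rw [abs_mul, abs_pow]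
  gcongr
  calc |y| ^ i ≤ max 1 |y| ^ i := by gcongr; exact le_max_right _ _
    _ ≤ max 1 |y| ^ n := pow_le_pow_right₀ (le_max_left _ _) (Finset.mem_range_succ_iff.1 hi)

lemma hasDerivAt_mul_eval_log (P : ℝ[X]) {x : ℝ} (hx : x ≠ 0) :
    HasDerivAt (fun T => T * P.eval (Real.log T)) ((P + derivative P).eval (Real.log x)) x := by
  have hcomp : HasDerivAt (fun T => P.eval (Real.log T))
      ((derivative P).eval (Real.log x) * x⁻¹) x :=
    (P.hasDerivAt (Real.log x)).comp x (Real.hasDerivAt_log hx)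
  refine ((hasDerivAt_id' x).mul hcomp).congr_deriv ?_
  rw [eval_add]
  field_simp

lemma max_one_abs_log_le_two_mul_log {t x : ℝ} (ht : 2 ≤ t) (hx : 1 ≤ x) (hxt : x ≤ 2 * t) :
    max 1 |Real.log x| ≤ 2 * Real.log t := by
  have hlog2 : Real.log 2 ≤ Real.log t := Real.log_le_log two_pos ht
  have hlogx : Real.log x ≤ Real.log 2 + Real.log t := by
    rw [← Real.log_mul two_ne_zero (by positivity)]
    exact Real.log_le_log (by positivity) hxt
  rw [abs_of_nonneg (Real.log_nonneg hx)]
  exact max_le (by linarith [Real.log_two_gt_d9]) (by linarith)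

lemma mul_eval_log_sub_mul_eval_log_le {P : ℝ[X]} {n : ℕ} (hP : P.natDegree ≤ n) {t δ : ℝ}
    (ht : 2 ≤ t) (hδ : 0 ≤ δ) (hδt : δ ≤ t / 2) :
    (t + δ) * P.eval (Real.log (t + δ)) - (t - δ) * P.eval (Real.log (t - δ)) ≤
      (∑ i ∈ Finset.range (n + 1), |(P + derivative P).coeff i|) * (2 * Real.log t) ^ n *
        (2 * δ) := by
  have hQ : (P + derivative P).natDegree ≤ n :=
    (natDegree_add_le _ _).trans (max_le hP ((natDegree_derivative_le P).trans (by omega)))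
  have hderiv : ∀ x ∈ Set.Icc (t - δ) (t + δ), HasDerivWithinAt
      (fun T => T * P.eval (Real.log T)) ((P + derivative P).eval (Real.log x))
      (Set.Icc (t - δ) (t + δ)) x := fun x hx =>
    (hasDerivAt_mul_eval_log P (by linarith [hx.1])).hasDerivWithinAt
  have hbound : ∀ x ∈ Set.Icc (t - δ) (t + δ), ‖(P + derivative P).eval (Real.log x)‖ ≤
      (∑ i ∈ Finset.range (n + 1), |(P + derivative P).coeff i|) * (2 * Real.log t) ^ n :=
    fun x hx => (abs_eval_le_sum_abs_coeff_mul_max_pow hQ _).trans <| by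
      gcongr
      exact max_one_abs_log_le_two_mul_log ht (by linarith [hx.1]) (by linarith [hx.2])
  have hmvt := (convex_Icc _ _).norm_image_sub_le_of_norm_hasDerivWithin_le hderiv hbound
    (Set.left_mem_Icc.2 (by linarith)) (Set.right_mem_Icc.2 (by linarith))
  rw [show t + δ - (t - δ) = 2 * δ by ring, Real.norm_of_nonneg (by linarith : 0 ≤ 2 * δ)] at hmvt
  exact (le_abs_self _).trans hmvt

lemma integral_le_of_abs_moment_sub_le {g : ℝ → ℝ} (hg : Continuous g) {κ C₀ : ℝ}
    (hκ₀ : 0 ≤ κ) (hκ₁ : κ ≤ 1) (hC₀ : 0 ≤ C₀) {P : ℝ[X]} {n : ℕ} (hP : P.natDegree ≤ n)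
    (hmom : ∀ T : ℝ, 2 ≤ T →
      |1 / T * (∫ u in (0:ℝ)..T, g u) - P.eval (Real.log T)| ≤ C₀ * T ^ (-κ))
    {t δ : ℝ} (ht : 4 ≤ t) (hδ : 0 ≤ δ) (hδt : δ ≤ t / 2) :
    ∫ u in (t - δ)..(t + δ), g u ≤
      (∑ i ∈ Finset.range (n + 1), |(P + derivative P).coeff i|) * (2 * Real.log t) ^ n *
        (2 * δ) + 3 * C₀ * t ^ (1 - κ) := by
  have hupper := abs_le.1 <| abs_sub_mul_le_of_abs_one_div_mul_sub_le (by linarith)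
    (hmom (t + δ) (by linarith))
  have hlower := abs_le.1 <| abs_sub_mul_le_of_abs_one_div_mul_sub_le (by linarith)
    (hmom (t - δ) (by linarith))
  have hmain := mul_eval_log_sub_mul_eval_log_le hP (by linarith) hδ hδt
  have hrpow_add : (t + δ) ^ (1 - κ) ≤ 2 * t ^ (1 - κ) :=
    calc (t + δ) ^ (1 - κ) ≤ (2 * t) ^ (1 - κ) := by gcongr; linarith
      _ = 2 ^ (1 - κ) * t ^ (1 - κ) := Real.mul_rpow zero_le_two (by linarith)
      _ ≤ 2 ^ (1:ℝ) * t ^ (1 - κ) := by gcongr <;> linarith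
      _ = 2 * t ^ (1 - κ) := by rw [Real.rpow_one]
  have hrpow_sub : (t - δ) ^ (1 - κ) ≤ t ^ (1 - κ) := by gcongr <;> linarith
  rw [← integral_interval_sub_left (hg.intervalIntegrable _ _) (hg.intervalIntegrable _ _)]
  nlinarith [mul_le_mul_of_nonneg_left hrpow_add hC₀, mul_le_mul_of_nonneg_left hrpow_sub hC₀]

theorem stmt6 (κ : ℝ) (hκ : κ ∈ Set.Ioo (0:ℝ) 1) (P : Polynomial ℝ) (hP : P.degree = 4)
    (C₀ : ℝ) (hC₀ : 0 < C₀)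
    (hmom : ∀ T : ℝ, 2 ≤ T →
      |(1 / T) * (∫ u in (0:ℝ)..T, ‖riemannZeta (1/2 + Complex.I * u)‖ ^ 4) -
          P.eval (Real.log T)| ≤ C₀ * T ^ (-κ)) :
    ∃ C₁ > (0:ℝ), ∀ t : ℝ, 10 ≤ t → ∀ η : ℝ, 2 / t < η → η < 1 →
      (∫ r in (0:ℝ)..(1/η),
          ‖riemannZeta (1/2 + Complex.I * (t - r))‖ ^ 2 *
            ‖riemannZeta (1/2 + Complex.I * (t + r))‖ ^ 2) ≤
        C₁ * ((Real.log t) ^ 4 / η + t ^ (1 - κ)) := by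
  set K := ∑ i ∈ Finset.range (4 + 1), |(P + derivative P).coeff i|
  have hK : 0 ≤ K := Finset.sum_nonneg fun i _ => abs_nonneg _
  refine ⟨16 * K + 2 * C₀, by positivity, fun t ht η hη hη₁ => ?_⟩
  have hη₀ : 0 < η := lt_trans (by positivity) hη
  have hδt : 1 / η ≤ t / 2 := by
    rw [div_lt_iff₀ (by positivity)] at hη
    rw [div_le_div_iff₀ hη₀ two_pos]
    linarith
  have hZ := continuous_norm_riemannZeta_criticalLine
  have hsym := integral_sq_mul_sq_le_integral_pow_four hZ t (by positivity : 0 ≤ 1 / η)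
  have hshort := integral_le_of_abs_moment_sub_le (by fun_prop) hκ.1.le hκ.2.le hC₀.le
    (natDegree_eq_of_degree_eq_some hP).le hmom (by linarith) (by positivity) hδt
  simp only [Complex.ofReal_sub, Complex.ofReal_add] at hsym
  have hrpow : 0 ≤ t ^ (1 - κ) := by positivity
  calc _ ≤ _ := hsym
    _ ≤ 16 * K * (Real.log t ^ 4 / η) + 3 / 2 * C₀ * t ^ (1 - κ) := by
      rw [mul_assoc, show (2 * Real.log t) ^ 4 * (2 * (1 / η)) = 32 * (Real.log t ^ 4 / η) by
        ring] at hshort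
      linarith
    _ ≤ (16 * K + 2 * C₀) * (Real.log t ^ 4 / η + t ^ (1 - κ)) := by
      nlinarith [mul_nonneg hK hrpow, mul_nonneg hC₀.le (by positivity : 0 ≤ Real.log t ^ 4 / η)]
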